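/- arXiv:1602.02422 — 6 statements merged into one kernel-verified Lean document; each statement's English description precedes it below -/
import Mathlib

section
/- Maximum acyclic induced subgraph (MAIS) bound (Proposition 2): Let G be a directed side information graph on n vertices and let S be a subset of vertices such that the induced subgraph G|_S contains no directed cycle. Then every (t, r) index code for G satisfies r ≥ t·|S|; consequently |S| ≤ β(G). -/
/-- A `(t, r)` index code for the side-information relation `E` on vertex type `V`:
an edge `i → j` (i.e., `E i j`) means that receiver `j` has message `i` as side
information.  Messages are `t`-bit strings `Fin t → Bool`, the broadcast index is an
`r`-bit string `Fin r → Bool`, and every receiver `j` can recover its message `x j`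
from the index and its side information. -/
structure IndexCode {V : Type*} (E : V → V → Prop) (t r : ℕ) where
  enc : (V → (Fin t → Bool)) → (Fin r → Bool)
  dec : ∀ j : V, (Fin r → Bool) → (({i : V // E i j}) → (Fin t → Bool)) → (Fin t → Bool)
  correct : ∀ (x : V → (Fin t → Bool)) (j : V),
    dec j (enc x) (fun i => x i.1) = x j

/-- The broadcast rate `β = inf { r / t : a (t, r) index code exists }`. -/
noncomputable def broadcastRate {V : Type*} (E : V → V → Prop) : ℝ :=
  sInf { q : ℝ | ∃ t r : ℕ, 0 < t ∧ Nonempty (IndexCode E t r) ∧ q = (r : ℝ) / t }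


/-- The induced subgraph `G|_S` contains no directed cycle: no vertex can reach itself
by a nonempty directed path staying inside `S`. -/
def NoDirectedCycle {V : Type*} (E : V → V → Prop) (S : Set V) : Prop :=
  ∀ v : V, ¬ Relation.TransGen (fun a b => a ∈ S ∧ b ∈ S ∧ E a b) v v

/-- **Maximum acyclic induced subgraph (MAIS) bound.**  If `S` is a set of vertices of a
directed side information graph `G` such that the induced subgraph `G|_S` has no directed
cycle, then every `(t, r)` index code satisfies `r ≥ t * |S|`, and hence `|S| ≤ β(G)`. -/
theorem mais_bound (n : ℕ) (E : Fin n → Fin n → Prop) (S : Finset (Fin n))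
    (hacyclic : NoDirectedCycle E (S : Set (Fin n))) :
    (∀ t r : ℕ, 0 < t → Nonempty (IndexCode E t r) → t * S.card ≤ r) ∧
      (S.card : ℝ) ≤ broadcastRate E := by
  classical
  set R : Fin n → Fin n → Prop :=
    fun a b => a ∈ (S : Set (Fin n)) ∧ b ∈ (S : Set (Fin n)) ∧ E a b with hR
  -- R is well-founded
  have hwfT : WellFounded (Relation.TransGen R) := by
    have : IsTrans (Fin n) (Relation.TransGen R) := ⟨fun _ _ _ => Relation.TransGen.trans⟩
    have : IsIrrefl (Fin n) (Relation.TransGen R) := ⟨fun a => hacyclic a⟩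
    exact Finite.wellFounded_of_trans_of_irrefl _
  have hwf : WellFounded R := Subrelation.wf (fun h => Relation.TransGen.single h) hwfT
  have main : ∀ t r : ℕ, 0 < t → Nonempty (IndexCode E t r) → t * S.card ≤ r := by
    intro t r _ ⟨C⟩
    -- extend a function on S by zero
    let ext : ({j : Fin n // j ∈ S} → (Fin t → Bool)) → (Fin n → (Fin t → Bool)) :=
      fun a j => if h : j ∈ S then a ⟨j, h⟩ else fun _ => false
    have hinj : Function.Injective (fun a => C.enc (ext a)) := by
      intro a b hab
      have hab' : C.enc (ext a) = C.enc (ext b) := hab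
      have key : ∀ j : Fin n, ext a j = ext b j := by
        intro j
        induction j using hwf.induction with
        | _ j ih =>
          by_cases hj : j ∈ S
          · have hside : (fun i : {i : Fin n // E i j} => ext a i.1)
                = (fun i : {i : Fin n // E i j} => ext b i.1) := by
              funext i
              by_cases hi : i.1 ∈ S
              · exact ih i.1 ⟨hi, hj, i.2⟩
              · simp only [ext, dif_neg hi]
            calc ext a j = C.dec j (C.enc (ext a)) (fun i => ext a i.1) :=
                  (C.correct (ext a) j).symm
              _ = C.dec j (C.enc (ext b)) (fun i => ext b i.1) := by rw [hab', hside]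
              _ = ext b j := C.correct (ext b) j
          · simp only [ext, dif_neg hj]
      funext j
      have := key j.1
      simpa only [ext, dif_pos j.2] using this
    have hcard := Fintype.card_le_of_injective _ hinj
    have hdom : Fintype.card ({j : Fin n // j ∈ S} → (Fin t → Bool)) = 2 ^ (t * S.card) := by
      simp [Fintype.card_fun, ← pow_mul, mul_comm]
    have hcod : Fintype.card (Fin r → Bool) = 2 ^ r := by simp
    rw [hdom, hcod] at hcard
    exact (Nat.pow_le_pow_iff_right (by norm_num)).mp hcard
  refine ⟨main, ?_⟩
  -- a trivial index code always exists: t = 1, r = n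
  have hne : ∃ q : ℝ, q ∈ { q : ℝ | ∃ t r : ℕ, 0 < t ∧ Nonempty (IndexCode E t r) ∧ q = (r : ℝ) / t } := by
    refine ⟨(n : ℝ) / 1, 1, n, one_pos, ⟨⟨fun x j => x j 0, fun j idx _ _ => idx j, ?_⟩⟩, by norm_num⟩
    intro x j
    funext k
    have : k = 0 := Subsingleton.elim _ _
    simp [this]
  apply le_csInf hne
  rintro q ⟨t, r, ht, hC, rfl⟩
  have h := main t r ht hC
  have ht' : (0 : ℝ) < (t : ℝ) := by exact_mod_cast ht
  rw [le_div_iff₀ ht']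
  calc (S.card : ℝ) * t = ((t * S.card : ℕ) : ℝ) := by push_cast; ring
    _ ≤ (r : ℝ) := by exact_mod_cast h
end

section
/- Corollary to Theorem 1 (bilinear Ramsey bound case, a = b = c = 1): Let G be an undirected side information graph on n vertices such that for all positive integers i and j, every induced subgraph of G on at least i·j vertices contains a clique of size i or an independent set of size j. Then the clique covering scheme approximates the broadcast rate within a multiplicative factor of n^{2/3}; that is, χ(Ḡ) ≤ n^{2/3} · β(G). -/
namespace IndexCode

variable {V : Type*} {E : V → V → Prop}

noncomputable def trivial [Fintype V] (E : V → V → Prop) : IndexCode E 1 (Fintype.card V) where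
  enc x k := x ((Fintype.equivFin V).symm k) 0
  dec j idx _ _ := idx (Fintype.equivFin V j)
  correct x j := by
    funext b
    simp [Subsingleton.elim b 0]

theorem mul_card_le {t r : ℕ} (c : IndexCode E t r) {S : Finset V}
    (hS : ∀ i ∈ S, ∀ j ∈ S, ¬E i j) : t * S.card ≤ r := by
  classical
  let extend (y : S → Fin t → Bool) : V → Fin t → Bool :=
    fun v => if h : v ∈ S then y ⟨v, h⟩ else 0
  have hinj : Function.Injective fun y => c.enc (extend y) := by
    intro y y' (hy : c.enc (extend y) = c.enc (extend y'))
    funext ⟨j, hj⟩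
    have hside : (fun i : {i // E i j} => extend y i.1) = fun i => extend y' i.1 := by
      funext ⟨i, hij⟩
      have hi : i ∉ S := fun hi => hS i hi j hj hij
      simp [extend, hi]
    calc y ⟨j, hj⟩ = extend y j := by simp [extend, hj]
      _ = c.dec j (c.enc (extend y)) fun i => extend y i.1 := (c.correct _ j).symm
      _ = c.dec j (c.enc (extend y')) fun i => extend y' i.1 := by rw [hy, hside]
      _ = extend y' j := c.correct _ j
      _ = y' ⟨j, hj⟩ := by simp [extend, hj]
  have hcard := Fintype.card_le_of_injective _ hinj
  simp only [Fintype.card_fun, Fintype.card_bool, Fintype.card_fin, Fintype.card_coe,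
    ← pow_mul] at hcard
  exact (Nat.pow_le_pow_iff_right (by norm_num)).mp hcard

end IndexCode

theorem card_le_broadcastRate {V : Type*} [Fintype V] {E : V → V → Prop} {S : Finset V}
    (hS : ∀ i ∈ S, ∀ j ∈ S, ¬E i j) : (S.card : ℝ) ≤ broadcastRate E := by
  refine le_csInf ⟨_, 1, _, one_pos, ⟨IndexCode.trivial E⟩, rfl⟩ ?_
  rintro _ ⟨t, r, ht, ⟨c⟩, rfl⟩
  rw [le_div_iff₀ (by exact_mod_cast ht)]
  exact_mod_cast (mul_comm t S.card ▸ c.mul_card_le hS)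

namespace SimpleGraph

variable {V : Type*} (G : SimpleGraph V)

theorem indepNum_le_broadcastRate [Fintype V] : (G.indepNum : ℝ) ≤ broadcastRate G.Adj := by
  obtain ⟨s, hs⟩ := G.exists_isNIndepSet_indepNum
  rw [← hs.card_eq]
  refine card_le_broadcastRate fun i hi j hj hij => ?_
  exact hs.isIndepSet hi hj (G.ne_of_adj hij) hij

theorem colorable_compl_of_isClique_cover (P : Finset (Finset V))
    (hP : ∀ T ∈ P, G.IsClique (T : Set V)) (hcover : ∀ v, ∃ T ∈ P, v ∈ T) :
    Gᶜ.Colorable P.card := by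
  choose f hfP hvf using hcover
  let C : Gᶜ.Coloring P := Coloring.mk (fun v => ⟨f v, hfP v⟩) fun {v w} hvw hC => by
    have hfvw : f v = f w := congrArg Subtype.val hC
    have hw : w ∈ f v := hfvw ▸ hvf w
    exact ((compl_adj G v w).mp hvw).2 (hP _ (hfP v) (hvf v) hw hvw.ne)
  simpa using C.colorable

theorem exists_isClique_cover [DecidableEq V] {i j : ℕ} (hi : 0 < i)
    (h : ∀ S : Finset V, i * j ≤ S.card → ∃ T ⊆ S, T.card = i ∧ G.IsClique (T : Set V))
    (S : Finset V) :
    ∃ P : Finset (Finset V), (∀ T ∈ P, G.IsClique (T : Set V)) ∧ (∀ v ∈ S, ∃ T ∈ P, v ∈ T) ∧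
      i * (P.card + j) ≤ S.card + i * i * j := by
  induction S using Finset.strongInduction with
  | H S ih =>
  by_cases hS : S.card ≤ i * j
  · refine ⟨S.image ({·}), by simp, fun v hv => ?_, ?_⟩
    · exact ⟨{v}, Finset.mem_image_of_mem _ hv, Finset.mem_singleton_self v⟩
    · have := S.card_image_le (f := ({·} : V → Finset V))
      nlinarith
  obtain ⟨T, hTS, hTcard, hT⟩ := h S (by omega)
  obtain ⟨P, hP, hPcover, hPcard⟩ := ih (S \ T) (Finset.sdiff_ssubset hTS (by
    rw [← Finset.card_pos, hTcard]; exact hi))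
  refine ⟨insert T P, ?_, ?_, ?_⟩
  · simpa [hT] using hP
  · intro v hv
    by_cases hvT : v ∈ T
    · exact ⟨T, Finset.mem_insert_self _ _, hvT⟩
    · obtain ⟨U, hU, hvU⟩ := hPcover v (Finset.mem_sdiff.mpr ⟨hv, hvT⟩)
      exact ⟨U, Finset.mem_insert_of_mem hU, hvU⟩
  · have hST := Finset.card_sdiff_add_card_eq_card hTS
    have := Finset.card_insert_le T P
    nlinarith

theorem mul_chromaticNumber_compl_add_le [Fintype V] {i j : ℕ} (hi : 0 < i)
    (h : ∀ S : Finset V, i * j ≤ S.card → ∃ T ⊆ S, T.card = i ∧ G.IsClique (T : Set V)) :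
    i * (Gᶜ.chromaticNumber.toNat + j) ≤ Fintype.card V + i * i * j := by
  classical
  obtain ⟨P, hP, hcover, hcard⟩ := G.exists_isClique_cover hi h Finset.univ
  have hχ : Gᶜ.chromaticNumber.toNat ≤ P.card :=
    ENat.toNat_le_of_le_natCast (G.colorable_compl_of_isClique_cover P hP
      fun v => hcover v (Finset.mem_univ v)).chromaticNumber_le
  calc i * (Gᶜ.chromaticNumber.toNat + j) ≤ i * (P.card + j) := by gcongr
    _ ≤ Fintype.card V + i * i * j := by simpa using hcard

theorem one_le_indepNum [Finite V] [Nonempty V] : 1 ≤ G.indepNum := by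
  obtain ⟨v⟩ := ‹Nonempty V›
  have hv : G.IsIndepSet (({v} : Finset V) : Set V) := by simp
  simpa using hv.card_le_indepNum

theorem colorable_compl_one_of_indepNum_le_one [Finite V] (h : G.indepNum ≤ 1) :
    Gᶜ.Colorable 1 := by
  classical
  refine colorable_one_iff.mpr (eq_bot_iff.mpr fun v w hvw => ?_)
  have hpair : G.IsIndepSet (({v, w} : Finset V) : Set V) := by
    rw [Finset.coe_pair, ← isClique_compl]
    exact isClique_pair.mpr fun _ => hvw
  have := hpair.card_le_indepNum
  rw [Finset.card_pair hvw.ne] at this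
  omega

end SimpleGraph

/- `i = ⌈t⌉` gives `χ ≤ t ^ 2 + t * (α + 1) ≤ t ^ 2 * α` as soon as `α ≥ 3` or `t ≥ 3`; the
remaining cases `t ≤ α`, `α = 1` and `α = 2 ∧ t < 3` are settled by `i = 1`, `hα₁` and `i = 2`. -/
theorem le_sq_mul_of_forall_mul_add_le {t : ℝ} {α χ : ℕ} (ht : 0 ≤ t) (hα : 1 ≤ α)
    (hα₁ : α = 1 → χ ≤ 1)
    (hcover : ∀ i : ℕ, 0 < i → (i : ℝ) * (χ + (α + 1)) ≤ t ^ 3 + i * i * (α + 1)) :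
    (χ : ℝ) ≤ t ^ 2 * α := by
  rcases le_or_gt t α with htα | hαt
  · have h₁ := hcover 1 one_pos
    push_cast at h₁
    calc (χ : ℝ) ≤ t ^ 2 * t := by linarith
      _ ≤ t ^ 2 * α := by gcongr
  rcases hα.eq_or_lt with rfl | hα₂
  · have hχ : (χ : ℝ) ≤ 1 := by exact_mod_cast hα₁ rfl
    push_cast at hαt ⊢
    nlinarith
  have hα₂' : (2 : ℝ) ≤ α := by exact_mod_cast hα₂
  by_cases hsmall : α = 2 ∧ t < 3
  · obtain ⟨rfl, ht₃⟩ := hsmall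
    have h₂ := hcover 2 two_pos
    push_cast at h₂ hαt ⊢
    -- `4 t ^ 2 - t ^ 3 - 6 = t (t - 2) (3 - t) + 3 - (t - 3) ^ 2` is positive on `[2, 3]`
    nlinarith [mul_nonneg (mul_nonneg ht (sub_nonneg.mpr hαt.le)) (sub_nonneg.mpr ht₃.le)]
  have hkey : t + (α + 1) ≤ t * α := by
    rcases not_and_or.mp hsmall with hα₃ | ht₃
    · have hα₃' : (3 : ℝ) ≤ α := by exact_mod_cast (by omega : 3 ≤ α)
      nlinarith
    · nlinarith
  set i := ⌈t⌉₊
  have hti : t ≤ i := Nat.le_ceil t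
  have hit : (i : ℝ) < t + 1 := Nat.ceil_lt_add_one ht
  have hi : (0 : ℝ) < i := by linarith
  have hcover_i := hcover i (by exact_mod_cast hi)
  have : (i : ℝ) * χ ≤ i * (t ^ 2 * α) :=
    calc (i : ℝ) * χ ≤ t ^ 2 * t + i * (i - 1) * (α + 1) := by linarith
      _ ≤ t ^ 2 * i + i * t * (α + 1) := by gcongr; linarith
      _ = i * (t * (t + (α + 1))) := by ring
      _ ≤ i * (t * (t * α)) := by gcongr
      _ = i * (t ^ 2 * α) := by ring
  exact le_of_mul_le_mul_left this hi

/-- **Corollary to Theorem 1 (bilinear Ramsey case `a = b = c = 1`).**  If `G` is an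
undirected side information graph on `n` vertices such that for all positive integers
`i, j`, every induced subgraph of `G` on at least `i * j` vertices contains a clique of
size `i` or an independent set of size `j`, then `χ(Ḡ) ≤ n^(2/3) * β(G)`. -/
theorem corollary_bilinear (n : ℕ) (G : SimpleGraph (Fin n))
    (hRamsey : ∀ i j : ℕ, 0 < i → 0 < j → ∀ S : Finset (Fin n),
      i * j ≤ S.card →
      (∃ T ⊆ S, T.card = i ∧ G.IsClique (T : Set (Fin n))) ∨
      (∃ T ⊆ S, T.card = j ∧ Gᶜ.IsClique (T : Set (Fin n)))) :
    ((Gᶜ.chromaticNumber.toNat : ℝ)) ≤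
      (n : ℝ) ^ ((2 : ℝ) / 3) * broadcastRate G.Adj := by
  rcases Nat.eq_zero_or_pos n with rfl | hn
  · simp [SimpleGraph.chromaticNumber_eq_zero_of_isEmpty]
  have : Nonempty (Fin n) := ⟨⟨0, hn⟩⟩
  have hclique (i : ℕ) (hi : 0 < i) (S : Finset (Fin n)) (hS : i * (G.indepNum + 1) ≤ S.card) :
      ∃ T ⊆ S, T.card = i ∧ G.IsClique (T : Set (Fin n)) :=
    (hRamsey i _ hi G.indepNum.succ_pos S hS).resolve_right fun ⟨T, _, hT, hindep⟩ => by
      have := (G.isClique_compl.mp hindep).card_le_indepNum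
      omega
  set t := (n : ℝ) ^ ((1 : ℝ) / 3)
  have ht3 : t ^ 3 = n := by
    rw [← Real.rpow_natCast, ← Real.rpow_mul n.cast_nonneg]; norm_num
  have ht2 : (n : ℝ) ^ ((2 : ℝ) / 3) = t ^ 2 := by
    rw [← Real.rpow_natCast, ← Real.rpow_mul n.cast_nonneg]; norm_num
  rw [ht2]
  calc (Gᶜ.chromaticNumber.toNat : ℝ) ≤ t ^ 2 * G.indepNum := by
        refine le_sq_mul_of_forall_mul_add_le (by positivity) G.one_le_indepNum
          (fun h => ?_) fun i hi => ?_
        · exact ENat.toNat_le_of_le_natCast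
            (G.colorable_compl_one_of_indepNum_le_one h.le).chromaticNumber_le
        · rw [ht3]
          exact_mod_cast (by simpa using G.mul_chromaticNumber_compl_add_le hi (hclique i hi))
    _ ≤ t ^ 2 * broadcastRate G.Adj := by gcongr; exact G.indepNum_le_broadcastRate
end

section
/- Lemma 8 for the class of line graphs (host-graph form): For all positive integers i and j, every simple undirected graph H with at least i·j edges contains either a set of i edges that pairwise share an endpoint (equivalently, a clique of size i in the line graph of H) or a matching of size j (j pairwise disjoint edges, equivalently an independent set of size j in the line graph of H). In other words, the Ramsey number of the class of line graphs satisfies R_L(i, j) ≤ i·j. -/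
/-!
If no `i` edges share a vertex, every vertex has degree `D ≤ i - 1`, so it suffices to prove
`|E| ≤ (D + 1) ν`, where `ν` is the matching number. This goes by induction on `|E|`. A
disconnected edge set splits into two vertex-disjoint parts, and `ν` is superadditive over such a
split. A vertex whose deletion lowers `ν` is deleted, losing at most `D` edges. Otherwise Gallai's
lemma applies: a connected graph in which every vertex is missed by some maximum matching has at
most `2ν + 1` vertices, and then counting degrees (each at most `min D (2ν)`) gives the bound.
-/

open Finset

namespace EdgeFinset

variable {V : Type*} {E F M N : Finset (Sym2 V)} {e f : Sym2 V} {x y : V}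

-- Loops are not excluded here: edge sets carry the hypothesis `∀ e ∈ E, ¬e.IsDiag` instead.
def IsMatching (M : Finset (Sym2 V)) : Prop :=
  (M : Set (Sym2 V)).Pairwise fun e f => ∀ x ∈ e, x ∉ f

open Classical in
noncomputable def matchingNumber (E : Finset (Sym2 V)) : ℕ :=
  {M ∈ E.powerset | IsMatching M}.sup card

lemma IsMatching.mono (hM : IsMatching M) (h : N ⊆ M) : IsMatching N :=
  Set.Pairwise.mono (coe_subset.2 h) hM

lemma IsMatching.eq_of_mem (hM : IsMatching M) (he : e ∈ M) (hf : f ∈ M) (hxe : x ∈ e)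
    (hxf : x ∈ f) : e = f :=
  by_contra fun h => hM he hf h x hxe hxf

lemma card_le_matchingNumber (hME : M ⊆ E) (hM : IsMatching M) : #M ≤ matchingNumber E := by
  classical
  exact le_sup (mem_filter.2 ⟨mem_powerset.2 hME, hM⟩)

def IsMaximumMatching (E M : Finset (Sym2 V)) : Prop :=
  M ⊆ E ∧ IsMatching M ∧ #M = matchingNumber E

lemma exists_isMaximumMatching (E : Finset (Sym2 V)) : ∃ M, IsMaximumMatching E M := by
  classical
  obtain ⟨M, hM, hMc⟩ := exists_mem_eq_sup {M ∈ E.powerset | IsMatching M}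
    ⟨∅, mem_filter.2 ⟨empty_mem_powerset E, by simp [IsMatching]⟩⟩ card
  rw [mem_filter, mem_powerset] at hM
  exact ⟨M, hM.1, hM.2, hMc.symm⟩

def graph (E : Finset (Sym2 V)) : SimpleGraph V := SimpleGraph.fromEdgeSet E

lemma graph_adj : (graph E).Adj x y ↔ s(x, y) ∈ E ∧ x ≠ y :=
  SimpleGraph.fromEdgeSet_adj _

lemma reachable_of_mem (he : e ∈ E) (hx : x ∈ e) (hy : y ∈ e) : (graph E).Reachable x y := by
  obtain rfl | hxy := eq_or_ne x y
  · rfl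
  · rw [(Sym2.mem_and_mem_iff hxy).1 ⟨hx, hy⟩] at he
    exact (graph_adj.2 ⟨he, hxy⟩).reachable

variable [DecidableEq V]

def verts (E : Finset (Sym2 V)) : Finset V := E.biUnion Sym2.toFinset

def degree (E : Finset (Sym2 V)) (x : V) : ℕ := #{e ∈ E | x ∈ e}

@[simp]
lemma mem_verts : x ∈ verts E ↔ ∃ e ∈ E, x ∈ e := by
  simp [verts]

lemma mem_verts_of_mem (he : e ∈ E) (hx : x ∈ e) : x ∈ verts E :=
  mem_verts.2 ⟨e, he, hx⟩

lemma verts_mono (h : E ⊆ F) : verts E ⊆ verts F :=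
  biUnion_subset_biUnion_of_subset_left _ h

@[simp]
lemma mem_verts_insert : x ∈ verts (insert e E) ↔ x ∈ e ∨ x ∈ verts E := by
  simp [verts]

lemma card_insert_of_forall_notMem_verts (h : ∀ t ∈ e, t ∉ verts M) : #(insert e M) = #M + 1 :=
  card_insert_of_notMem fun he => h _ e.out_fst_mem (mem_verts_of_mem he e.out_fst_mem)

lemma verts_union : verts (E ∪ F) = verts E ∪ verts F :=
  union_biUnion

lemma card_verts_le (E : Finset (Sym2 V)) : #(verts E) ≤ 2 * #E :=
  calc #(verts E) ≤ ∑ e ∈ E, #e.toFinset := card_biUnion_le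
    _ ≤ ∑ _e ∈ E, 2 := sum_le_sum fun e _ => by rw [Sym2.card_toFinset]; split_ifs <;> omega
    _ = 2 * #E := by rw [sum_const, smul_eq_mul, mul_comm]

lemma sum_degree_eq (hloop : ∀ e ∈ E, ¬e.IsDiag) : ∑ x ∈ verts E, degree E x = 2 * #E := by
  have hfilter : ∀ e ∈ E, {x ∈ verts E | x ∈ e} = e.toFinset := fun e he => by
    ext x
    simpa using fun hx => mem_verts_of_mem he hx
  calc ∑ x ∈ verts E, degree E x = ∑ e ∈ E, #{x ∈ verts E | x ∈ e} :=
        sum_card_bipartiteAbove_eq_sum_card_bipartiteBelow _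
    _ = ∑ _e ∈ E, 2 := sum_congr rfl fun e he => by
        rw [hfilter e he, Sym2.card_toFinset_of_not_isDiag e (hloop e he)]
    _ = 2 * #E := by rw [sum_const, smul_eq_mul, mul_comm]

lemma degree_le_card_verts_sub_one (hloop : ∀ e ∈ E, ¬e.IsDiag) (x : V) :
    degree E x ≤ #(verts E) - 1 := by
  by_cases hx : x ∈ verts E
  swap
  · have : {e ∈ E | x ∈ e} = ∅ :=
      filter_eq_empty_iff.2 fun e he hxe => hx (mem_verts_of_mem he hxe)
    simp [degree, this]
  rw [← card_erase_of_mem hx]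
  refine (card_le_card fun e he => ?_).trans (card_image_le (f := (s(x, ·))))
  obtain ⟨he, hxe⟩ := mem_filter.1 he
  obtain ⟨y, rfl⟩ := Sym2.mem_iff_exists.1 hxe
  have hyx : y ≠ x := fun h => hloop _ he (Sym2.mk_isDiag_iff.2 h.symm)
  exact mem_image.2 ⟨y, mem_erase.2 ⟨hyx, mem_verts_of_mem he (Sym2.mem_mk_right x y)⟩, rfl⟩

lemma degree_mono (h : E ⊆ F) (x : V) : degree E x ≤ degree F x :=
  card_le_card (filter_subset_filter _ h)

lemma two_mul_card_le (hloop : ∀ e ∈ E, ¬e.IsDiag) {D : ℕ} (hD : ∀ x, degree E x ≤ D) :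
    2 * #E ≤ #(verts E) * D :=
  calc 2 * #E = ∑ x ∈ verts E, degree E x := (sum_degree_eq hloop).symm
    _ ≤ ∑ _x ∈ verts E, D := sum_le_sum fun x _ => hD x
    _ = #(verts E) * D := by rw [sum_const, smul_eq_mul]

lemma IsMatching.insert (hM : IsMatching M) (he : ∀ x ∈ e, x ∉ verts M) :
    IsMatching (insert e M) := by
  rw [IsMatching, coe_insert, Set.pairwise_insert]
  exact ⟨hM, fun f hf _ => ⟨fun x hxe hxf => he x hxe (mem_verts_of_mem hf hxf),
    fun x hxf hxe => he x hxe (mem_verts_of_mem hf hxf)⟩⟩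

lemma IsMatching.mem_verts_erase (hM : IsMatching M) (he : e ∈ M) :
    x ∈ verts (M.erase e) ↔ x ∈ verts M ∧ x ∉ e := by
  simp only [mem_verts, mem_erase]
  refine ⟨fun ⟨f, ⟨hfe, hf⟩, hxf⟩ => ⟨⟨f, hf, hxf⟩, fun hxe => hfe (hM.eq_of_mem hf he hxf hxe)⟩,
    fun ⟨⟨f, hf, hxf⟩, hxe⟩ => ⟨f, ⟨fun h => hxe (h ▸ hxf), hf⟩, hxf⟩⟩

lemma IsMatching.union (hM : IsMatching M) (hN : IsMatching N)
    (h : Disjoint (verts M) (verts N)) : IsMatching (M ∪ N) := by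
  rw [IsMatching, coe_union, Set.pairwise_union]
  refine ⟨hM, hN, fun e he f hf _ => ⟨fun x hxe hxf => ?_, fun x hxf hxe => ?_⟩⟩ <;>
  exact disjoint_left.1 h (mem_verts_of_mem he hxe) (mem_verts_of_mem hf hxf)

lemma matchingNumber_add_le (h : Disjoint (verts E) (verts F)) :
    matchingNumber E + matchingNumber F ≤ matchingNumber (E ∪ F) := by
  obtain ⟨M, hME, hM, hMc⟩ := exists_isMaximumMatching E
  obtain ⟨N, hNF, hN, hNc⟩ := exists_isMaximumMatching F
  have hMN : Disjoint (verts M) (verts N) := h.mono (verts_mono hME) (verts_mono hNF)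
  have hdisj : Disjoint M N := disjoint_left.2 fun e heM heN =>
    disjoint_left.1 hMN (mem_verts_of_mem heM e.out_fst_mem) (mem_verts_of_mem heN e.out_fst_mem)
  rw [← hMc, ← hNc, ← card_union_of_disjoint hdisj]
  exact card_le_matchingNumber (union_subset_union hME hNF) (hM.union hN hMN)

lemma exchange_edge {w : V} (hM : IsMatching M) (he : s(w, x) ∈ M) (hwx : w ≠ x)
    (hyM : y ∉ verts M) :
    IsMatching (insert s(x, y) (M.erase s(w, x))) ∧ #(insert s(x, y) (M.erase s(w, x))) = #M ∧
      verts (insert s(x, y) (M.erase s(w, x))) ⊆ insert y ((verts M).erase w) := by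
  have hxM : x ∈ verts M := mem_verts_of_mem he (Sym2.mem_mk_right w x)
  have h : ∀ t ∈ s(x, y), t ∉ verts (M.erase s(w, x)) := by
    simp only [Sym2.forall_mem_pair, hM.mem_verts_erase he]
    exact ⟨fun h => h.2 (Sym2.mem_mk_right w x), fun h => hyM h.1⟩
  refine ⟨(hM.mono (erase_subset _ _)).insert h, ?_, fun t ht => ?_⟩
  · rw [card_insert_of_forall_notMem_verts h, card_erase_add_one he]
  · simp only [mem_verts_insert, hM.mem_verts_erase he, Sym2.mem_iff, mem_insert, mem_erase] at ht ⊢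
    grind

lemma augment_of_augment_erase {w : V} {N' : Finset (Sym2 V)} (hM : IsMatching M)
    (hN : IsMatching N) (heM : s(w, x) ∈ M) (hfN : s(x, y) ∈ N) (hwN : w ∉ verts N)
    (hN'sub : N' ⊆ M.erase s(w, x) ∪ N.erase s(x, y)) (hN' : IsMatching N')
    (hN'c : #N' = #(N.erase s(x, y)) + 1) :
    ∃ N'' ⊆ M ∪ N, IsMatching N'' ∧ #N'' = #N + 1 := by
  have h : ∀ t ∈ s(w, x), t ∉ verts N' := fun t ht h' => by
    have := verts_mono hN'sub h'
    simp only [verts_union, mem_union, hM.mem_verts_erase heM, hN.mem_verts_erase hfN,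
      Sym2.mem_iff] at this ht
    grind
  refine ⟨_, insert_subset (mem_union_left _ heM) ?_, hN'.insert h, ?_⟩
  · exact hN'sub.trans (union_subset_union (erase_subset _ _) (erase_subset _ _))
  · rw [card_insert_of_forall_notMem_verts h, hN'c, card_erase_add_one hfN]

lemma exchange_of_exchange_erase {w z : V} {M' : Finset (Sym2 V)} (hM : IsMatching M)
    (hN : IsMatching N) (heM : s(w, x) ∈ M) (hfN : s(x, y) ∈ N)
    (hwN : w ∉ verts N) (hyM : y ∈ verts M) (hM'sub : M' ⊆ M.erase s(w, x) ∪ N.erase s(x, y))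
    (hz : z ∈ verts (N.erase s(x, y))) (hM' : IsMatching M') (hM'c : #M' = #(M.erase s(w, x)))
    (hM'v : verts M' ⊆ insert z ((verts (M.erase s(w, x))).erase y)) :
    ∃ M'' ⊆ M ∪ N, ∃ z ∈ verts N, IsMatching M'' ∧ #M'' = #M ∧
      verts M'' ⊆ insert z ((verts M).erase w) := by
  rw [hN.mem_verts_erase hfN] at hz
  have h : ∀ t ∈ s(x, y), t ∉ verts M' := fun t ht h' => by
    have := hM'v h'
    simp only [mem_insert, mem_erase, hM.mem_verts_erase heM, Sym2.mem_iff] at this ht hz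
    grind
  refine ⟨_, insert_subset (mem_union_right _ hfN) ?_, z, hz.1, hM'.insert h, ?_, fun t ht => ?_⟩
  · exact hM'sub.trans (union_subset_union (erase_subset _ _) (erase_subset _ _))
  · rw [card_insert_of_forall_notMem_verts h, hM'c, card_erase_add_one heM]
  · have := @hM'v t
    simp only [mem_verts_insert, mem_insert, mem_erase, hM.mem_verts_erase heM,
      Sym2.mem_iff] at ht this hz ⊢
    grind [mem_verts_of_mem]

-- Flip the alternating path of `M ∪ N` that starts at `w` with an `M`-edge: if it ends with an
-- `M`-edge this augments `N`; otherwise it ends at some `z ∈ verts N`, and `M` trades `w` for `z`.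
theorem augment_or_exchange {M N : Finset (Sym2 V)} (hloop : ∀ e ∈ M ∪ N, ¬e.IsDiag)
    (hM : IsMatching M) (hN : IsMatching N) {w : V} (hwM : w ∈ verts M) (hwN : w ∉ verts N) :
    (∃ N' ⊆ M ∪ N, IsMatching N' ∧ #N' = #N + 1) ∨
    ∃ M' ⊆ M ∪ N, ∃ z ∈ verts N, IsMatching M' ∧ #M' = #M ∧
      verts M' ⊆ insert z ((verts M).erase w) := by
  obtain ⟨e, heM, hwe⟩ := mem_verts.1 hwM
  obtain ⟨x, rfl⟩ := Sym2.mem_iff_exists.1 hwe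
  have hwx : w ≠ x := fun h => hloop _ (mem_union_left _ heM) (Sym2.mk_isDiag_iff.2 h)
  by_cases hxN : x ∉ verts N
  · have h : ∀ t ∈ s(w, x), t ∉ verts N := Sym2.forall_mem_pair.2 ⟨hwN, hxN⟩
    exact .inl ⟨_, insert_subset (mem_union_left _ heM) subset_union_right, hN.insert h,
      card_insert_of_forall_notMem_verts h⟩
  obtain ⟨f, hfN, hxf⟩ := mem_verts.1 (not_not.1 hxN)
  obtain ⟨y, rfl⟩ := Sym2.mem_iff_exists.1 hxf
  have hyN : y ∈ verts N := mem_verts_of_mem hfN (Sym2.mem_mk_right x y)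
  have hyx : y ≠ x := fun h => hloop _ (mem_union_right _ hfN) (Sym2.mk_isDiag_iff.2 h.symm)
  by_cases hyM : y ∉ verts M
  · obtain ⟨h₁, h₂, h₃⟩ := exchange_edge hM heM hwx hyM
    exact .inr ⟨_, insert_subset (mem_union_right _ hfN)
      ((erase_subset _ _).trans subset_union_left), y, hyN, h₁, h₂, h₃⟩
  rw [not_not] at hyM
  have hyM₀ : y ∈ verts (M.erase s(w, x)) := by
    rw [hM.mem_verts_erase heM, Sym2.mem_iff]
    grind [mem_verts_of_mem]
  have hyN₀ : y ∉ verts (N.erase s(x, y)) := by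
    simp [hN.mem_verts_erase hfN]
  have hloop₀ : ∀ e ∈ M.erase s(w, x) ∪ N.erase s(x, y), ¬e.IsDiag := fun e he =>
    hloop e (union_subset_union (erase_subset _ _) (erase_subset _ _) he)
  rcases augment_or_exchange hloop₀ (hM.mono (erase_subset _ _)) (hN.mono (erase_subset _ _))
    hyM₀ hyN₀ with ⟨N', hN'sub, hN', hN'c⟩ | ⟨M', hM'sub, z, hz, hM', hM'c, hM'v⟩
  · exact .inl (augment_of_augment_erase hM hN heM hfN hwN hN'sub hN' hN'c)
  · exact .inr (exchange_of_exchange_erase hM hN heM hfN hwN hyM hM'sub hz hM' hM'c hM'v)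
termination_by #N
decreasing_by exact card_erase_lt_of_mem hfN

lemma exists_split_of_not_reachable (hx : x ∈ verts E) (hy : y ∈ verts E)
    (hxy : ¬(graph E).Reachable x y) :
    ∃ E₁ ⊂ E, ∃ E₂ ⊂ E, E₁ ∪ E₂ = E ∧ Disjoint (verts E₁) (verts E₂) := by
  classical
  obtain ⟨ex, hex, hxex⟩ := mem_verts.1 hx
  obtain ⟨ey, hey, hyey⟩ := mem_verts.1 hy
  refine ⟨{e ∈ E | ∀ t ∈ e, (graph E).Reachable x t}, filter_ssubset.2 ⟨ey, hey, ?_⟩,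
    {e ∈ E | ¬∀ t ∈ e, (graph E).Reachable x t}, filter_ssubset.2 ⟨ex, hex, ?_⟩,
    filter_union_filter_not_eq _ _, disjoint_left.2 fun t ht₁ ht₂ => ?_⟩
  · exact fun h => hxy (h y hyey)
  · exact not_not.2 fun t ht => reachable_of_mem hex hxex ht
  · obtain ⟨e₁, he₁, hte₁⟩ := mem_verts.1 ht₁
    obtain ⟨e₂, he₂, hte₂⟩ := mem_verts.1 ht₂
    exact (mem_filter.1 he₂).2 fun s hs =>
      ((mem_filter.1 he₁).2 t hte₁).trans (reachable_of_mem (mem_filter.1 he₂).1 hte₂ hs)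

lemma IsMaximumMatching.exists_missing (hloop : ∀ e ∈ E, ¬e.IsDiag) {w : V}
    (hM : IsMaximumMatching E M) (hwM : w ∈ verts M)
    (hw : matchingNumber E ≤ matchingNumber {e ∈ E | w ∉ e}) :
    ∃ M', IsMaximumMatching E M' ∧ w ∉ verts M' ∧ ∃ z, ∀ t ∉ verts M, t ≠ z → t ∉ verts M' := by
  obtain ⟨N, hNE, hN, hNc⟩ := exists_isMaximumMatching {e ∈ E | w ∉ e}
  have hMNE : M ∪ N ⊆ E := union_subset hM.1 (hNE.trans (filter_subset _ _))
  have hwN : w ∉ verts N := fun hw => by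
    obtain ⟨e, he, hwe⟩ := mem_verts.1 hw
    exact (mem_filter.1 (hNE he)).2 hwe
  rcases augment_or_exchange (fun e he => hloop e (hMNE he)) hM.2.1 hN hwM hwN with
    ⟨N', hN'sub, hN', hN'c⟩ | ⟨M', hM'sub, z, hzN, hM', hM'c, hM'v⟩
  · have := card_le_matchingNumber (hN'sub.trans hMNE) hN'
    omega
  refine ⟨M', ⟨hM'sub.trans hMNE, hM', hM'c.trans hM.2.2⟩, fun h => ?_, z,
    fun t ht htz h => by simpa [ht, htz] using hM'v h⟩
  have := hM'v h
  simp only [mem_insert, mem_erase] at this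
  grind

-- Induction on the distance: the neighbour `w` of `u` on a shortest path is covered by `M`, and
-- `exists_missing` turns `M` into a maximum matching missing `w` and one of `u`, `v`.
lemma IsMaximumMatching.mem_verts_or_mem_verts (hloop : ∀ e ∈ E, ¬e.IsDiag)
    (hess : ∀ v, matchingNumber E ≤ matchingNumber {e ∈ E | v ∉ e})
    (hM : IsMaximumMatching E M) {u v : V} (huv : u ≠ v) (hreach : (graph E).Reachable u v) :
    u ∈ verts M ∨ v ∈ verts M := by
  induction hd : (graph E).dist u v using Nat.strong_induction_on generalizing u v M with
  | _ d ih =>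
  by_contra! h
  obtain ⟨p, hp⟩ := hreach.exists_walk_length_eq_dist
  cases p with
  | nil => exact huv rfl
  | cons hadj q =>
  rename_i w
  have huw := graph_adj.1 hadj
  obtain rfl | hwv := eq_or_ne w v
  · have hu : ∀ t ∈ s(u, w), t ∉ verts M := Sym2.forall_mem_pair.2 h
    have := card_le_matchingNumber (insert_subset huw.1 hM.1) (hM.2.1.insert hu)
    rw [card_insert_of_forall_notMem_verts hu, hM.2.2] at this
    omega
  have hq : q.length ≠ 0 := fun h0 => hwv (q.eq_of_length_eq_zero h0)
  rw [SimpleGraph.Walk.length_cons] at hp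
  have ih_uw : ∀ M', IsMaximumMatching E M' → u ∈ verts M' ∨ w ∈ verts M' := fun M' hM' =>
    ih _ (by rw [SimpleGraph.dist_eq_one_iff_adj.2 hadj]; omega) hM' huw.2 hadj.reachable rfl
  have ih_wv : ∀ M', IsMaximumMatching E M' → w ∈ verts M' ∨ v ∈ verts M' := fun M' hM' =>
    ih _ (by have := SimpleGraph.dist_le q; omega) hM' hwv q.reachable rfl
  obtain ⟨M', hM', hwM', z, hM'z⟩ :=
    hM.exists_missing hloop ((ih_uw M hM).resolve_left h.1) (hess w)
  obtain rfl | huz := eq_or_ne u z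
  · exact (ih_wv M' hM').elim hwM' (hM'z v h.2 huv.symm)
  · exact (ih_uw M' hM').elim (hM'z u h.1 huz) hwM'

theorem card_verts_le_two_mul_matchingNumber_add_one (hloop : ∀ e ∈ E, ¬e.IsDiag)
    (hconn : ∀ x ∈ verts E, ∀ y ∈ verts E, (graph E).Reachable x y)
    (hess : ∀ v, matchingNumber E ≤ matchingNumber {e ∈ E | v ∉ e}) :
    #(verts E) ≤ 2 * matchingNumber E + 1 := by
  obtain ⟨M, hM⟩ := exists_isMaximumMatching E
  by_contra! hlt
  have : 1 < #(verts E \ verts M) := by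
    have := hM.2.2 ▸ card_verts_le M
    have := card_sdiff_of_subset (verts_mono hM.1)
    omega
  obtain ⟨u, hu, v, hv, huv⟩ := one_lt_card.1 this
  rw [mem_sdiff] at hu hv
  exact (hM.mem_verts_or_mem_verts hloop hess huv (hconn u hu.1 v hv.1)).elim hu.2 hv.2

lemma le_succ_mul_of_two_mul_le {a n m D : ℕ} (hn : n ≤ 2 * m + 1) (h₁ : 2 * a ≤ n * D)
    (h₂ : 2 * a ≤ n * (n - 1)) : a ≤ (D + 1) * m := by
  rcases le_or_gt D (2 * m) with hD | hD
  · nlinarith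
  · have : n - 1 ≤ 2 * m := by omega
    nlinarith

theorem card_le_succ_mul_matchingNumber (hloop : ∀ e ∈ E, ¬e.IsDiag) {D : ℕ}
    (hD : ∀ x, degree E x ≤ D) : #E ≤ (D + 1) * matchingNumber E := by
  induction E using Finset.strongInduction with
  | H E ih =>
  have ih' : ∀ F ⊂ E, #F ≤ (D + 1) * matchingNumber F := fun F hF =>
    ih F hF (fun e he => hloop e (hF.subset he)) fun x => (degree_mono hF.subset x).trans (hD x)
  by_cases hconn : ∀ x ∈ verts E, ∀ y ∈ verts E, (graph E).Reachable x y
  swap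
  · push Not at hconn
    obtain ⟨x, hx, y, hy, hxy⟩ := hconn
    obtain ⟨E₁, h₁, E₂, h₂, rfl, hdisj⟩ := exists_split_of_not_reachable hx hy hxy
    calc #(E₁ ∪ E₂) ≤ #E₁ + #E₂ := card_union_le _ _
      _ ≤ (D + 1) * matchingNumber E₁ + (D + 1) * matchingNumber E₂ :=
        add_le_add (ih' _ h₁) (ih' _ h₂)
      _ ≤ (D + 1) * matchingNumber (E₁ ∪ E₂) := by
        rw [← mul_add]
        exact Nat.mul_le_mul_left _ (matchingNumber_add_le hdisj)
  by_cases hess : ∀ v, matchingNumber E ≤ matchingNumber {e ∈ E | v ∉ e}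
  · exact le_succ_mul_of_two_mul_le
      (card_verts_le_two_mul_matchingNumber_add_one hloop hconn hess) (two_mul_card_le hloop hD)
      (two_mul_card_le hloop (degree_le_card_verts_sub_one hloop))
  push Not at hess
  obtain ⟨v, hv⟩ := hess
  have hsub : {e ∈ E | v ∉ e} ⊂ E := (filter_subset _ _).ssubset_of_ne fun h => by
    rw [h] at hv
    exact lt_irrefl _ hv
  calc #E = degree E v + #{e ∈ E | v ∉ e} := (card_filter_add_card_filter_not _).symm
    _ ≤ D + (D + 1) * matchingNumber {e ∈ E | v ∉ e} := add_le_add (hD v) (ih' _ hsub)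
    _ ≤ (D + 1) * matchingNumber E := by nlinarith

end EdgeFinset

theorem line_graph_ramsey_bound_general {V : Type*} [Fintype V] [DecidableEq V]
    (i j : ℕ) (hi : 0 < i)
    (H : SimpleGraph V) [DecidableRel H.Adj]
    (hcard : i * j ≤ H.edgeFinset.card) :
    (∃ T ⊆ H.edgeFinset, T.card = i ∧
        ∀ e ∈ T, ∀ f ∈ T, e ≠ f → ∃ x : V, x ∈ e ∧ x ∈ f) ∨
    (∃ T ⊆ H.edgeFinset, T.card = j ∧
        ∀ e ∈ T, ∀ f ∈ T, e ≠ f → ∀ x : V, ¬(x ∈ e ∧ x ∈ f)) := by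
  by_cases hstar : ∃ v, i ≤ EdgeFinset.degree H.edgeFinset v
  · obtain ⟨v, hv⟩ := hstar
    obtain ⟨T, hT, hTc⟩ := exists_subset_card_eq hv
    refine .inl ⟨T, hT.trans (filter_subset _ _), hTc, fun e he f hf _ => ⟨v, ?_, ?_⟩⟩
    exacts [(mem_filter.1 (hT he)).2, (mem_filter.1 (hT hf)).2]
  push Not at hstar
  have hloop : ∀ e ∈ H.edgeFinset, ¬e.IsDiag := fun e he =>
    H.not_isDiag_of_mem_edgeSet (SimpleGraph.mem_edgeFinset.1 he)
  have hE := EdgeFinset.card_le_succ_mul_matchingNumber hloop (D := i - 1) fun v => by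
    have := hstar v; omega
  rw [Nat.sub_add_cancel hi] at hE
  have hj : j ≤ EdgeFinset.matchingNumber H.edgeFinset :=
    le_of_mul_le_mul_left (hcard.trans hE) hi
  obtain ⟨M, hME, hM, hMc⟩ := EdgeFinset.exists_isMaximumMatching H.edgeFinset
  obtain ⟨T, hTM, hTc⟩ := exists_subset_card_eq (hMc ▸ hj)
  exact .inr ⟨T, hTM.trans hME, hTc, fun e he f hf hef x hx =>
    hM (hTM he) (hTM hf) hef x hx.1 hx.2⟩

/-- **Ramsey bound for the class of line graphs (host-graph form), `R_L(i,j) ≤ i·j`.**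
For all positive integers `i` and `j`, every simple undirected graph `H` with at least
`i * j` edges contains either a set of `i` edges that pairwise share an endpoint (a
clique of size `i` in the line graph of `H`) or a matching of size `j` (`j` pairwise
disjoint edges, an independent set of size `j` in the line graph of `H`). -/
theorem line_graph_ramsey_bound {V : Type*} [Fintype V] [DecidableEq V]
    (i j : ℕ) (hi : 0 < i) (hj : 0 < j)
    (H : SimpleGraph V) [DecidableRel H.Adj]
    (hcard : i * j ≤ H.edgeFinset.card) :
    (∃ T ⊆ H.edgeFinset, T.card = i ∧
        ∀ e ∈ T, ∀ f ∈ T, e ≠ f → ∃ x : V, x ∈ e ∧ x ∈ f) ∨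
    (∃ T ⊆ H.edgeFinset, T.card = j ∧
        ∀ e ∈ T, ∀ f ∈ T, e ≠ f → ∀ x : V, ¬(x ∈ e ∧ x ∈ f)) :=
  line_graph_ramsey_bound_general i j hi H hcard
end

section
/- Alon–Kahale lemma (Lemma 2, hereditary form): Let G be a simple undirected graph on n vertices, and let k, m, j be positive integers such that every induced subgraph of G on at least m vertices contains a clique of size k or an independent set of size j. If the chromatic number of the complement satisfies χ(Ḡ) ≥ n/k + m, then G contains an independent set of size j, i.e., α(G) ≥ j. -/
open Finset

lemma alon_kahale_aux {V : Type*} [DecidableEq V] (G : SimpleGraph V) (k m : ℕ) (hk : 0 < k)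
    (hclique : ∀ S : Finset V, m ≤ S.card → ∃ T ⊆ S, T.card = k ∧ G.IsClique (T : Set V)) :
    ∀ S : Finset V, ∃ P : Finset (Finset V),
      (∀ T ∈ P, T ⊆ S ∧ T.card = k ∧ G.IsClique (T : Set V)) ∧
      (P : Set (Finset V)).PairwiseDisjoint id ∧
      (S \ P.sup id).card < m ∧ P.card * k + (S \ P.sup id).card = S.card := by
  intro S
  induction S using Finset.strongInduction with
  | _ S ih =>
    by_cases hS : S.card < m
    · refine ⟨∅, by simp, by simp, ?_, by simp⟩
      simpa using hS
    · push_neg at hS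
      obtain ⟨T, hTS, hTcard, hTcl⟩ := hclique S hS
      have hTne : T.Nonempty := Finset.card_pos.mp (hTcard ▸ hk)
      have hss : S \ T ⊂ S := Finset.sdiff_ssubset hTS hTne
      obtain ⟨P, hP1, hP2, hP3, hP4⟩ := ih (S \ T) hss
      have hTnotin : T ∉ P := by
        intro h
        have := (hP1 T h).1
        obtain ⟨x, hx⟩ := hTne
        exact (Finset.mem_sdiff.mp (this hx)).2 hx
      have hdisjT : ∀ U ∈ P, Disjoint T U := by
        intro U hU
        exact Finset.disjoint_left.mpr fun x hxT hxU =>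
          (Finset.mem_sdiff.mp ((hP1 U hU).1 hxU)).2 hxT
      refine ⟨insert T P, ?_, ?_, ?_, ?_⟩
      · intro U hU
        rcases Finset.mem_insert.mp hU with rfl | hU
        · exact ⟨hTS, hTcard, hTcl⟩
        · exact ⟨(hP1 U hU).1.trans (Finset.sdiff_subset), (hP1 U hU).2⟩
      · rw [Finset.coe_insert]
        refine Set.PairwiseDisjoint.insert hP2 ?_
        intro U hU _
        exact hdisjT U hU
      · have hsup : (insert T P).sup id = T ∪ P.sup id := by
          rw [Finset.sup_insert]; rfl
        have : S \ (insert T P).sup id = (S \ T) \ P.sup id := by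
          rw [hsup, Finset.sdiff_union_distrib]
          rw [Finset.sdiff_sdiff_left']
        rw [this]; exact hP3
      · have hsup : S \ (insert T P).sup id = (S \ T) \ P.sup id := by
          rw [Finset.sup_insert]
          show S \ (T ∪ P.sup id) = _
          rw [Finset.sdiff_union_distrib, Finset.sdiff_sdiff_left']
        rw [hsup, Finset.card_insert_of_notMem hTnotin, add_mul, one_mul]
        have h1 : (S \ T).card = S.card - T.card := Finset.card_sdiff_of_subset hTS
        have h2 : T.card ≤ S.card := Finset.card_le_card hTS
        omega


/-- **Alon–Kahale lemma (hereditary form).**  Let `G` be a simple undirected graph on `n`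
vertices and `k, m, j` positive integers such that every induced subgraph of `G` on at
least `m` vertices contains a clique of size `k` or an independent set of size `j`.  If
`χ(Ḡ) ≥ n/k + m`, then `G` contains an independent set of size `j`. -/
theorem alon_kahale {V : Type*} [Fintype V] (G : SimpleGraph V)
    (k m j : ℕ) (hk : 0 < k) (hm : 0 < m) (hj : 0 < j)
    (hRamsey : ∀ S : Finset V, m ≤ S.card →
      (∃ T ⊆ S, T.card = k ∧ G.IsClique (T : Set V)) ∨
      (∃ T ⊆ S, T.card = j ∧ Gᶜ.IsClique (T : Set V)))
    (hchrom : (Fintype.card V : ℝ) / (k : ℝ) + (m : ℝ) ≤ (Gᶜ.chromaticNumber.toNat : ℝ)) :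
    ∃ T : Finset V, T.card = j ∧ Gᶜ.IsClique (T : Set V) := by
  classical
  by_contra hcon
  push_neg at hcon
  have hclique : ∀ S : Finset V, m ≤ S.card →
      ∃ T ⊆ S, T.card = k ∧ G.IsClique (T : Set V) := by
    intro S hS
    rcases hRamsey S hS with h | ⟨T, _, hTc, hTcl⟩
    · exact h
    · exact absurd hTcl (hcon T hTc)
  obtain ⟨P, hP1, hP2, hP3, hP4⟩ := alon_kahale_aux G k m hk hclique Finset.univ
  set R : Finset V := Finset.univ \ P.sup id with hR
  -- build a coloring of Gᶜ
  have hmem : ∀ v : V, v ∉ P.sup id → v ∈ R := fun v hv => by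
    simp [hR, hv]
  let f : V → (↥P ⊕ ↥R) := fun v =>
    if h : v ∈ P.sup id then
      Sum.inl ⟨(Finset.mem_sup.mp h).choose, (Finset.mem_sup.mp h).choose_spec.1⟩
    else Sum.inr ⟨v, hmem v h⟩
  have hvalid : ∀ {v w : V}, Gᶜ.Adj v w → f v ≠ f w := by
    intro v w hvw heq
    have hne : v ≠ w := Gᶜ.ne_of_adj hvw
    have hnadj : ¬ G.Adj v w := hvw.2
    by_cases hv : v ∈ P.sup id <;> by_cases hw : w ∈ P.sup id
    · simp only [f, dif_pos hv, dif_pos hw] at heq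
      have h1 := (Finset.mem_sup.mp hv).choose_spec
      have h2 := (Finset.mem_sup.mp hw).choose_spec
      have hTeq : (Finset.mem_sup.mp hv).choose = (Finset.mem_sup.mp hw).choose := by
        have := Sum.inl.inj heq
        exact congrArg Subtype.val this
      have hvT : v ∈ (Finset.mem_sup.mp hv).choose := h1.2
      have hwT : w ∈ (Finset.mem_sup.mp hv).choose := hTeq ▸ h2.2
      have hcl := (hP1 _ h1.1).2.2
      exact hnadj (hcl hvT hwT hne)
    · simp only [f, dif_pos hv, dif_neg hw] at heq
      exact Sum.inl_ne_inr heq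
    · simp only [f, dif_neg hv, dif_pos hw] at heq
      exact Sum.inr_ne_inl heq
    · simp only [f, dif_neg hv, dif_neg hw] at heq
      exact hne (congrArg Subtype.val (Sum.inr.inj heq))
  have hcolor : Gᶜ.Colorable (P.card + R.card) := by
    have := (SimpleGraph.Coloring.mk f hvalid).colorable
    simpa [Fintype.card_sum] using this
  have hle : Gᶜ.chromaticNumber ≤ (P.card + R.card : ℕ) := hcolor.chromaticNumber_le
  have htop : Gᶜ.chromaticNumber ≠ ⊤ :=
    ne_top_of_le_ne_top (ENat.coe_ne_top _) hle
  have hnat : Gᶜ.chromaticNumber.toNat ≤ P.card + R.card := by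
    rw [← ENat.coe_toNat htop] at hle
    exact_mod_cast hle
  -- arithmetic
  have h1 : (P.card : ℝ) * k + R.card = Fintype.card V := by
    have := hP4
    rw [Finset.card_univ] at this
    exact_mod_cast this
  have h2 : (P.card : ℝ) ≤ (Fintype.card V : ℝ) / k := by
    rw [le_div_iff₀ (by exact_mod_cast hk)]
    nlinarith [Nat.cast_nonneg (α := ℝ) R.card]
  have h3 : (R.card : ℝ) ≤ (m : ℝ) - 1 := by
    have hRm : R.card + 1 ≤ m := hP3
    have : (R.card : ℝ) + 1 ≤ m := by exact_mod_cast hRm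
    linarith
  have h4 : (Gᶜ.chromaticNumber.toNat : ℝ) ≤ P.card + R.card := by exact_mod_cast hnat
  linarith
end

section
/- Acyclic induced subgraph in unidirected graphs (combinatorial core of Lemma 9 and Theorem 5): Let G be a directed graph on n ≥ 1 vertices whose edge relation is irreflexive and asymmetric (for every pair of vertices i, j, if there is an edge i → j then there is no edge j → i). Then there exists a subset S of vertices with |S| ≥ ⌊log₂ n⌋ such that the induced subgraph G|_S contains no directed cycle. -/
/-! Fix any vertex `v`. By asymmetry, every other vertex either has no edge into `v` or no edge
out of `v`, so one of these two classes contains half of the remaining vertices. Recursing into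
it and placing `v` before (as a source) or after (as a sink) the set returned by the recursion
gains one vertex while at most halving the ground set, which yields a subset of size `> log₂ n`
whose edges all increase along a ranking `f : V → ℕ`; such a subset has no directed cycle. -/

def Ranked {V : Type*} (E : V → V → Prop) (S : Set V) : Prop :=
  ∃ f : V → ℕ, ∀ a ∈ S, ∀ b ∈ S, E a b → f a < f b

namespace Ranked

variable {V : Type*} {E : V → V → Prop}

theorem noDirectedCycle {S : Set V} (hS : Ranked E S) : NoDirectedCycle E S := by
  obtain ⟨f, hf⟩ := hS
  intro v hcycle
  have hlt : Relation.TransGen (· < ·) (f v) (f v) :=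
    hcycle.lift f fun a b ⟨ha, hb, hab⟩ => hf a ha b hb hab
  rw [Relation.transGen_eq_self] at hlt
  exact lt_irrefl _ hlt

theorem insert_source {S : Set V} {v : V} (hS : Ranked E S) (hv : ¬E v v)
    (hin : ∀ a ∈ S, ¬E a v) : Ranked E (insert v S) := by
  classical
  obtain ⟨f, hf⟩ := hS
  refine ⟨fun a => if a = v then 0 else f a + 1, fun a ha b hb hab => ?_⟩
  by_cases hbv : b = v
  · subst hbv
    by_cases hav : a = b
    · exact absurd (hav ▸ hab) hv
    · exact absurd hab (hin a (ha.resolve_left hav))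
  · by_cases hav : a = v
    · simp only [if_pos hav, if_neg hbv]
      exact Nat.succ_pos _
    · simp only [if_neg hav, if_neg hbv]
      exact Nat.succ_lt_succ (hf a (ha.resolve_left hav) b (hb.resolve_left hbv) hab)

theorem insert_sink {S : Finset V} {v : V} (hS : Ranked E S) (hv : ¬E v v)
    (hout : ∀ b ∈ S, ¬E v b) : Ranked E (insert v (S : Set V)) := by
  classical
  obtain ⟨f, hf⟩ := hS
  refine ⟨fun a => if a = v then S.sup f + 1 else f a, fun a ha b hb hab => ?_⟩
  by_cases hav : a = v
  · subst hav
    by_cases hbv : b = a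
    · exact absurd (hbv ▸ hab) hv
    · exact absurd hab (hout b (hb.resolve_left hbv))
  · have haS : a ∈ S := ha.resolve_left hav
    by_cases hbv : b = v
    · simp only [if_neg hav, if_pos hbv]
      exact Nat.lt_succ_of_le (Finset.le_sup haS)
    · simp only [if_neg hav, if_neg hbv]
      exact hf a haS b (hb.resolve_left hbv) hab

end Ranked

section Recursion

variable {V : Type*} {E : V → V → Prop}

theorem exists_half_subset_source_or_sink [DecidableEq V] (hasymm : ∀ a b, E a b → ¬E b a)
    (T : Finset V) (v : V) :
    ∃ U ⊆ T.erase v, (T.erase v).card ≤ 2 * U.card ∧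
      ((∀ a ∈ U, ¬E a v) ∨ ∀ b ∈ U, ¬E v b) := by
  classical
  set I := (T.erase v).filter (fun a => E a v)
  set O := (T.erase v).filter (fun a => ¬E a v)
  have hsplit : I.card + O.card = (T.erase v).card := Finset.card_filter_add_card_filter_not _
  rcases le_total I.card O.card with hle | hle
  · exact ⟨O, Finset.filter_subset _ _, by omega, Or.inl fun a ha => (Finset.mem_filter.mp ha).2⟩
  · refine ⟨I, Finset.filter_subset _ _, by omega, Or.inr fun b hb => ?_⟩
    exact hasymm b v (Finset.mem_filter.mp hb).2

theorem exists_ranked_subset_lt_two_pow (hasymm : ∀ a b, E a b → ¬E b a) (T : Finset V) :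
    ∃ S ⊆ T, T.card < 2 ^ S.card ∧ Ranked E S := by
  classical
  induction T using Finset.strongInduction with
  | H T ih =>
    obtain rfl | ⟨v, hvT⟩ := T.eq_empty_or_nonempty
    · exact ⟨∅, subset_rfl, by simp, ⟨fun _ => 0, by simp⟩⟩
    obtain ⟨U, hUT, hUcard, hU⟩ := exists_half_subset_source_or_sink hasymm T v
    obtain ⟨S, hSU, hScard, hS⟩ := ih U (hUT.trans_ssubset (Finset.erase_ssubset hvT))
    have hvS : v ∉ S := fun h => Finset.notMem_erase v T (hUT (hSU h))
    have hvv : ¬E v v := fun h => hasymm v v h h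
    refine ⟨insert v S, Finset.insert_subset hvT (hSU.trans (hUT.trans (T.erase_subset v))),
      ?_, ?_⟩
    · rw [Finset.card_insert_of_notMem hvS, pow_succ]
      have := Finset.card_erase_add_one hvT
      omega
    · rw [Finset.coe_insert]
      rcases hU with hin | hout
      · exact hS.insert_source hvv fun a ha => hin a (hSU ha)
      · exact hS.insert_sink hvv fun b hb => hout b (hSU hb)

end Recursion

theorem unidirected_acyclic_subset_general (n : ℕ)
    (E : Fin n → Fin n → Prop)
    (hasymm : ∀ i j : Fin n, E i j → ¬ E j i) :
    ∃ S : Finset (Fin n), Nat.log 2 n ≤ S.card ∧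
      NoDirectedCycle E (S : Set (Fin n)) := by
  obtain ⟨S, -, hcard, hS⟩ := exists_ranked_subset_lt_two_pow hasymm Finset.univ
  rw [Finset.card_univ, Fintype.card_fin] at hcard
  refine ⟨S, ?_, hS.noDirectedCycle⟩
  calc Nat.log 2 n ≤ Nat.log 2 (2 ^ S.card) := Nat.log_mono_right hcard.le
    _ = S.card := Nat.log_pow one_lt_two _

/-- **Acyclic induced subgraph in unidirected graphs.**  If `G` is a directed graph on
`n ≥ 1` vertices whose edge relation is irreflexive and asymmetric (no bidirectional
edges), then some subset `S` of vertices with `|S| ≥ ⌊log₂ n⌋` induces an acyclic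
subgraph. -/
theorem unidirected_acyclic_subset (n : ℕ) (hn : 1 ≤ n)
    (E : Fin n → Fin n → Prop)
    (hirrefl : ∀ i : Fin n, ¬ E i i)
    (hasymm : ∀ i j : Fin n, E i j → ¬ E j i) :
    ∃ S : Finset (Fin n), Nat.log 2 n ≤ S.card ∧
      NoDirectedCycle E (S : Set (Fin n)) :=
  unidirected_acyclic_subset_general n E hasymm
end

section
/- Theorem 5: Let G be a unidirected side information graph on n ≥ 1 vertices, i.e., for every pair of vertices i, j, if i ∈ A_j then j ∉ A_i (no bidirectional edges). Then every (t, r) index code for G satisfies r ≥ t·⌊log₂ n⌋, and consequently the broadcast rate satisfies β(G) ≥ ⌊log₂ n⌋. -/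
/-!
If the vertices of a set `S` can be ordered so that every edge between them points forward, then,
with all messages outside `S` fixed, the receivers in `S` decode their messages one after
another, each needing only side information that is already known. So the encoder is injective
on the `2 ^ (t * #S)` message tuples supported on `S`, and `t * #S ≤ r`. Such a set of size
`⌊log₂ n⌋` exists because `G` has no 2-cycles: given a vertex `v`, every other vertex `u`
satisfies `¬ E u v` or `¬ E v u`, so one of these two classes holds half of the remaining
vertices, and `v` can be put in front of, resp. behind, an ordering of that class.
-/

open Finset

variable {V : Type*} {E : V → V → Prop} {t r : ℕ}

def IsTopologicalOrder (E : V → V → Prop) (l : List V) : Prop :=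
  l.Pairwise fun u w => u ≠ w ∧ ¬ E w u

theorem IsTopologicalOrder.nodup {l : List V} (hl : IsTopologicalOrder E l) : l.Nodup :=
  hl.imp And.left

theorem IsTopologicalOrder.no_backward_edge {l : List V} (hl : IsTopologicalOrder E l) :
    l.Pairwise fun u w => ¬ E w u :=
  hl.imp And.right

theorem exists_isTopologicalOrder (huni : ∀ u v, E u v → ¬ E v u) (k : ℕ) (A : Finset V)
    (hA : 2 ^ k ≤ #A + 1) :
    ∃ l : List V, l.length = k ∧ (∀ v ∈ l, v ∈ A) ∧ IsTopologicalOrder E l := by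
  classical
  induction k generalizing A with
  | zero => exact ⟨[], rfl, by simp, List.Pairwise.nil⟩
  | succ k ih =>
    rw [pow_succ] at hA
    obtain ⟨v, hv⟩ : A.Nonempty := by
      rw [← card_pos]; have := Nat.one_le_two_pow (n := k); omega
    set B₁ := (A.erase v).filter (¬ E · v)
    set B₂ := (A.erase v).filter (¬ E v ·)
    have hB₁ : ∀ u ∈ B₁, u ∈ A ∧ v ≠ u ∧ ¬ E u v := fun u hu =>
      have ⟨hu, huv⟩ := mem_filter.1 hu
      ⟨mem_of_mem_erase hu, (ne_of_mem_erase hu).symm, huv⟩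
    have hB₂ : ∀ u ∈ B₂, u ∈ A ∧ u ≠ v ∧ ¬ E v u := fun u hu =>
      have ⟨hu, hvu⟩ := mem_filter.1 hu
      ⟨mem_of_mem_erase hu, ne_of_mem_erase hu, hvu⟩
    have hcover : #(A.erase v) ≤ #B₁ + #B₂ := by
      refine (card_le_card fun u hu => ?_).trans (card_union_le B₁ B₂)
      by_cases huv : E u v
      · exact mem_union_right _ (mem_filter.2 ⟨hu, huni u v huv⟩)
      · exact mem_union_left _ (mem_filter.2 ⟨hu, huv⟩)
    rw [card_erase_of_mem hv] at hcover
    obtain hB | hB : 2 ^ k ≤ #B₁ + 1 ∨ 2 ^ k ≤ #B₂ + 1 := by omega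
    · obtain ⟨l, hlen, hlB, hl⟩ := ih B₁ hB
      have hlA := fun u hu => hB₁ u (hlB u hu)
      exact ⟨v :: l, by simp [hlen], List.forall_mem_cons.2 ⟨hv, fun u hu => (hlA u hu).1⟩,
        List.pairwise_cons.2 ⟨fun u hu => (hlA u hu).2, hl⟩⟩
    · obtain ⟨l, hlen, hlB, hl⟩ := ih B₂ hB
      have hlA := fun u hu => hB₂ u (hlB u hu)
      refine ⟨l ++ [v], by simp [hlen],
        List.forall_mem_append.2 ⟨fun u hu => (hlA u hu).1, List.forall_mem_singleton.2 hv⟩,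
        List.pairwise_append.2 ⟨hl, List.pairwise_singleton _ _, fun u hu w hw => ?_⟩⟩
      obtain rfl := List.mem_singleton.1 hw
      exact (hlA u hu).2

theorem IndexCode.eq_of_enc_eq (C : IndexCode E t r) (hirr : ∀ v, ¬ E v v) {l : List V}
    (hl : l.Pairwise fun u w => ¬ E w u) {x y : V → Fin t → Bool} (henc : C.enc x = C.enc y)
    (hout : ∀ i ∉ l, x i = y i) : x = y := by
  induction l with
  | nil => exact funext fun i => hout i List.not_mem_nil
  | cons v l ih =>
    obtain ⟨hv, hl⟩ := List.pairwise_cons.1 hl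
    refine ih hl fun i hi => ?_
    by_cases hiv : i = v
    · subst hiv
      -- the side information of `i` lies outside `i :: l`, where `x` and `y` agree
      have hside : (fun j : {j // E j i} => x j.1) = fun j => y j.1 := by
        funext ⟨j, hj⟩
        refine hout j fun hjl => ?_
        rcases List.mem_cons.1 hjl with rfl | hjl
        exacts [hirr j hj, hv j hjl hj]
      rw [← C.correct x, ← C.correct y, henc, hside]
    · exact hout i (by simp [hiv, hi])

theorem IndexCode.mul_card_toFinset_le [DecidableEq V] (C : IndexCode E t r)
    (hirr : ∀ v, ¬ E v v) {l : List V} (hl : l.Pairwise fun u w => ¬ E w u) :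
    t * #l.toFinset ≤ r := by
  let extend (y : l.toFinset → Fin t → Bool) (i : V) : Fin t → Bool :=
    if h : i ∈ l.toFinset then y ⟨i, h⟩ else fun _ => false
  have hinj : Function.Injective (C.enc ∘ extend) := by
    intro y y' h
    have hext := C.eq_of_enc_eq hirr hl h fun i hi => by simp [extend, hi]
    funext ⟨i, hi⟩
    simpa only [extend, dif_pos hi] using congrFun hext i
  have hcard := Fintype.card_le_of_injective _ hinj
  simp only [Fintype.card_fun, Fintype.card_bool, Fintype.card_fin, Fintype.card_coe] at hcard
  rw [← pow_mul] at hcard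
  exact (Nat.pow_le_pow_iff_right (by norm_num)).1 hcard

def IndexCode.broadcastAll {n : ℕ} (E : Fin n → Fin n → Prop) : IndexCode E 1 n where
  enc x i := x i 0
  dec j b _ _ := b j
  correct x j := funext fun s => by rw [Subsingleton.elim s 0]

theorem le_broadcastRate {c : ℕ} (hne : ∃ t r, 0 < t ∧ Nonempty (IndexCode E t r))
    (hc : ∀ t r, 0 < t → Nonempty (IndexCode E t r) → t * c ≤ r) :
    (c : ℝ) ≤ broadcastRate E := by
  obtain ⟨t₀, r₀, ht₀, hC₀⟩ := hne
  refine le_csInf ⟨_, t₀, r₀, ht₀, hC₀, rfl⟩ ?_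
  rintro _ ⟨t, r, ht, hC, rfl⟩
  rw [le_div_iff₀ (by exact_mod_cast ht)]
  exact_mod_cast (mul_comm c t).trans_le (hc t r ht hC)

theorem unidirected_lower_bound_general (n : ℕ)
    (E : Fin n → Fin n → Prop)
    (huni : ∀ i j : Fin n, E i j → ¬ E j i) :
    (∀ t r : ℕ, 0 < t → Nonempty (IndexCode E t r) → t * Nat.log 2 n ≤ r) ∧
      (Nat.log 2 n : ℝ) ≤ broadcastRate E := by
  have hcode : ∀ t r : ℕ, 0 < t → Nonempty (IndexCode E t r) → t * Nat.log 2 n ≤ r := by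
    rintro t r - ⟨C⟩
    obtain ⟨l, hlen, -, hl⟩ := exists_isTopologicalOrder huni (Nat.log 2 n) univ
      (by simpa using Nat.pow_log_le_add_one 2 n)
    have := C.mul_card_toFinset_le (fun v h => huni v v h h) hl.no_backward_edge
    rwa [List.toFinset_card_of_nodup hl.nodup, hlen] at this
  exact ⟨hcode, le_broadcastRate ⟨1, n, one_pos, ⟨IndexCode.broadcastAll E⟩⟩ hcode⟩

/-- **Theorem 5.**  If `G` is a unidirected side information graph on `n ≥ 1` vertices
(no bidirectional edges: `i ∈ A_j` implies `j ∉ A_i`), then every `(t, r)` index code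
for `G` satisfies `r ≥ t * ⌊log₂ n⌋`, and hence `β(G) ≥ ⌊log₂ n⌋`. -/
theorem unidirected_lower_bound (n : ℕ) (hn : 1 ≤ n)
    (E : Fin n → Fin n → Prop)
    (huni : ∀ i j : Fin n, E i j → ¬ E j i) :
    (∀ t r : ℕ, 0 < t → Nonempty (IndexCode E t r) → t * Nat.log 2 n ≤ r) ∧
      (Nat.log 2 n : ℝ) ≤ broadcastRate E :=
  unidirected_lower_bound_general n E huni
end
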